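/- Let W : ℝ → ℝ be locally Lipschitz with liminf_{x→±∞} W(x)/|x| > −∞, and let F : ℝ → ℝ be continuous with lim_{|x|→∞} F(x)/|x| = 0. Define Φ W(y) = −2κ ln ∫_ℝ g_{2κ}(y−x) exp(−(F(x)+W(x))/(2κ)) dx, where g_{2κ} is the centered Gaussian density of variance 2κ and κ > 0. Then Φ W(y) is finite for every y, and liminf_{y→+∞} (Φ W)(y)/y > −∞ and liminf_{y→−∞} (Φ W)(y)/|y| > −∞ (i.e. Φ maps the class ℍ into itself). -/

import Mathlib

open MeasureTheory Filter Topology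

noncomputable def gaussVar (t u : ℝ) : ℝ :=
  (Real.sqrt (2 * Real.pi * t))⁻¹ * Real.exp (-u ^ 2 / (2 * t))

/-- The kicked Hopf–Cole/HJB one-step operator on potentials:
`Φ W(y) = −2κ ln ∫ g_{2κ}(y−x) exp(−(F(x)+W(x))/(2κ)) dx`. -/
noncomputable def PhiW (κ : ℝ) (F W : ℝ → ℝ) (y : ℝ) : ℝ :=
  -(2 * κ) * Real.log (∫ x : ℝ, gaussVar (2 * κ) (y - x) * Real.exp (-((F x + W x) / (2 * κ))))

/-!
Since `F` is sublinear and `W` grows at least linearly downwards, the continuous function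
`F + W` satisfies `F x + W x ≥ -k |x| - M` on all of `ℝ`. Hence the integrand of `Φ W (y)` is
dominated by `e^{M/2κ} e^{a|y|} g_{2κ}(y - x) e^{a|y - x|}` with `a = k / 2κ`, whose integral is
`e^{M/2κ} e^{a|y|}` times a finite Gaussian moment `Z`. Taking `-2κ log` gives
`Φ W (y) ≥ -k |y| - 2κ log (e^{M/2κ} Z)`, a linear lower bound at both ends.
-/

open Real ProbabilityTheory

lemma locallyLipschitz_of_forall_isCompact {X Y : Type*} [PseudoEMetricSpace X]
    [WeaklyLocallyCompactSpace X] [PseudoEMetricSpace Y] {f : X → Y}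
    (h : ∀ K : Set X, IsCompact K → ∃ L, LipschitzOnWith L f K) : LocallyLipschitz f := by
  intro x
  obtain ⟨K, hK, hKx⟩ := exists_compact_mem_nhds x
  obtain ⟨L, hL⟩ := h K hK
  exact ⟨L, K, hKx, hL⟩

lemma Continuous.bddBelow_range_of_eventually_cocompact {X α : Type*} [TopologicalSpace X]
    [LinearOrder α] [TopologicalSpace α] [ClosedIicTopology α] {f : X → α} (hf : Continuous f)
    {c : α} (h : ∀ᶠ x in cocompact X, c ≤ f x) : BddBelow (Set.range f) := by
  have : Nonempty α := ⟨c⟩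
  obtain ⟨K, hK, hKc⟩ := mem_cocompact.mp h
  obtain ⟨m, hm⟩ := hK.bddBelow_image (f := f) hf.continuousOn
  refine ⟨min m c, ?_⟩
  rintro _ ⟨x, rfl⟩
  by_cases hx : x ∈ K
  · exact (min_le_left _ _).trans (hm ⟨x, hx, rfl⟩)
  · exact (min_le_right _ _).trans (hKc hx)

lemma exists_le_div_abs_cocompact {f : ℝ → ℝ} (hTop : ∃ c, ∀ᶠ x in atTop, c ≤ f x / |x|)
    (hBot : ∃ c, ∀ᶠ x in atBot, c ≤ f x / |x|) : ∃ c, ∀ᶠ x in cocompact ℝ, c ≤ f x / |x| := by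
  obtain ⟨c, hc⟩ := hTop
  obtain ⟨c', hc'⟩ := hBot
  refine ⟨min c c', ?_⟩
  rw [cocompact_eq_atBot_atTop, eventually_sup]
  exact ⟨hc'.mono fun x hx => (min_le_right _ _).trans hx,
    hc.mono fun x hx => (min_le_left _ _).trans hx⟩

lemma exists_forall_neg_mul_abs_sub_le {f : ℝ → ℝ} (hf : Continuous f) {c : ℝ}
    (h : ∀ᶠ x in cocompact ℝ, c ≤ f x / |x|) : ∃ k M : ℝ, 0 ≤ k ∧ ∀ x, -(k * |x|) - M ≤ f x := by
  have hpos : ∀ᶠ x in cocompact ℝ, 0 ≤ f x + |c| * |x| := by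
    filter_upwards [h, tendsto_norm_cocompact_atTop.eventually_gt_atTop 0] with x hx hnorm
    have hx0 : 0 < |x| := hnorm
    rw [le_div_iff₀ hx0] at hx
    nlinarith [neg_abs_le c]
  obtain ⟨m, hm⟩ :=
    (hf.add (continuous_const.mul continuous_abs)).bddBelow_range_of_eventually_cocompact hpos
  refine ⟨|c|, -m, abs_nonneg c, fun x => ?_⟩
  have hx : m ≤ f x + |c| * |x| := hm ⟨x, rfl⟩
  linarith

lemma exists_le_div_abs_cocompact_of_forall {f : ℝ → ℝ} {k M : ℝ}
    (h : ∀ x, -(k * |x|) - M ≤ f x) : ∃ c, ∀ᶠ x in cocompact ℝ, c ≤ f x / |x| := by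
  refine ⟨-k - |M|, ?_⟩
  filter_upwards [tendsto_norm_cocompact_atTop.eventually_ge_atTop 1] with x hnorm
  have hx : 1 ≤ |x| := hnorm
  rw [le_div_iff₀ (by linarith)]
  nlinarith [h x, le_abs_self M, abs_nonneg M]

lemma integral_pos_of_forall_pos {α : Type*} [MeasurableSpace α] {μ : Measure α} [NeZero μ]
    {f : α → ℝ} (hf : Integrable f μ) (hpos : ∀ x, 0 < f x) : 0 < ∫ x, f x ∂μ := by
  have hsupp : Function.support f = Set.univ := Set.eq_univ_of_forall fun x => (hpos x).ne'
  rw [integral_pos_iff_support_of_nonneg (fun x => (hpos x).le) hf, hsupp]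
  exact Measure.measure_univ_pos.mpr (NeZero.ne μ)

section Gaussian

variable {t : ℝ}

lemma gaussVar_eq_gaussianPDFReal (ht : 0 ≤ t) : gaussVar t = gaussianPDFReal 0 t.toNNReal := by
  ext u
  simp [gaussVar, gaussianPDFReal, Real.coe_toNNReal _ ht]

lemma gaussVar_pos (ht : 0 < t) (u : ℝ) : 0 < gaussVar t u := by
  rw [gaussVar_eq_gaussianPDFReal ht.le]
  exact gaussianPDFReal_pos _ _ _ (by simpa using ht)

@[fun_prop]
lemma continuous_gaussVar : Continuous (gaussVar t) := by
  unfold gaussVar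
  fun_prop

lemma integrable_gaussVar_mul_exp_mul_abs (ht : 0 < t) (a : ℝ) :
    Integrable (fun u => gaussVar t u * exp (a * |u|)) := by
  have hv : t.toNNReal ≠ 0 := by simpa using ht
  have h : Integrable (fun u => exp (a * |u|)) (gaussianReal 0 t.toNNReal) :=
    integrable_exp_mul_abs (X := id) (integrable_exp_mul_gaussianReal a)
      (integrable_exp_mul_gaussianReal (-a))
  rw [gaussianReal_of_var_ne_zero _ hv, integrable_withDensity_iff_integrable_smul'
    (measurable_gaussianPDF _ _) (ae_of_all _ fun _ => gaussianPDF_lt_top)] at h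
  simpa [gaussVar_eq_gaussianPDFReal ht.le] using h

variable {a C : ℝ} {φ : ℝ → ℝ}

lemma norm_gaussVar_sub_mul_le (ht : 0 < t) (ha : 0 ≤ a) (hφ : ∀ x, ‖φ x‖ ≤ C * exp (a * |x|))
    (y x : ℝ) :
    ‖gaussVar t (y - x) * φ x‖ ≤ C * exp (a * |y|) * (gaussVar t (y - x) * exp (a * |y - x|)) := by
  have hg := gaussVar_pos ht (y - x)
  have hC : 0 ≤ C := nonneg_of_mul_nonneg_left ((norm_nonneg _).trans (hφ x)) (exp_pos _)
  have hx : exp (a * |x|) ≤ exp (a * |y|) * exp (a * |y - x|) := by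
    rw [← exp_add, exp_le_exp, ← mul_add]
    refine mul_le_mul_of_nonneg_left ?_ ha
    linarith [abs_sub_abs_le_abs_sub x y, abs_sub_comm x y]
  calc ‖gaussVar t (y - x) * φ x‖ = gaussVar t (y - x) * ‖φ x‖ := by
        rw [norm_mul, Real.norm_of_nonneg hg.le]
    _ ≤ gaussVar t (y - x) * (C * (exp (a * |y|) * exp (a * |y - x|))) := by
        gcongr
        exact (hφ x).trans (mul_le_mul_of_nonneg_left hx hC)
    _ = _ := by ring

lemma integrable_gaussVar_sub_mul (ht : 0 < t) (ha : 0 ≤ a) (hφm : AEStronglyMeasurable φ)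
    (hφ : ∀ x, ‖φ x‖ ≤ C * exp (a * |x|)) (y : ℝ) :
    Integrable (fun x => gaussVar t (y - x) * φ x) :=
  (((integrable_gaussVar_mul_exp_mul_abs ht a).comp_sub_left y).const_mul _).mono'
    ((continuous_gaussVar.comp (continuous_sub_left y)).aestronglyMeasurable.mul hφm)
    (ae_of_all _ (norm_gaussVar_sub_mul_le ht ha hφ y))

lemma integral_gaussVar_sub_mul_le (ht : 0 < t) (ha : 0 ≤ a) (hφ : ∀ x, ‖φ x‖ ≤ C * exp (a * |x|))
    (y : ℝ) :
    ∫ x, gaussVar t (y - x) * φ x ≤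
      C * exp (a * |y|) * ∫ u, gaussVar t u * exp (a * |u|) :=
  calc ∫ x, gaussVar t (y - x) * φ x
      ≤ ∫ x, C * exp (a * |y|) * (gaussVar t (y - x) * exp (a * |y - x|)) :=
        (le_abs_self _).trans (norm_integral_le_of_norm_le
          (((integrable_gaussVar_mul_exp_mul_abs ht a).comp_sub_left y).const_mul _)
          (ae_of_all _ (norm_gaussVar_sub_mul_le ht ha hφ y)))
    _ = C * exp (a * |y|) * ∫ u, gaussVar t u * exp (a * |u|) := by
        rw [integral_const_mul,
          integral_sub_left_eq_self (fun u => gaussVar t u * exp (a * |u|)) volume y]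

end Gaussian

section PhiW

variable {κ k M : ℝ} {F W : ℝ → ℝ}

lemma norm_exp_neg_div_le (hκ : 0 < κ) (hFW : ∀ x, -(k * |x|) - M ≤ F x + W x) (x : ℝ) :
    ‖exp (-((F x + W x) / (2 * κ)))‖ ≤ exp (M / (2 * κ)) * exp (k / (2 * κ) * |x|) := by
  have hlin : -(M / (2 * κ) + k / (2 * κ) * |x|) * (2 * κ) = -(k * |x|) - M := by
    field_simp [hκ.ne']
    ring
  rw [Real.norm_of_nonneg (exp_nonneg _), ← exp_add, exp_le_exp, neg_le,
    le_div_iff₀ (by positivity), hlin]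
  exact hFW x

lemma integrable_gaussVar_sub_mul_exp (hκ : 0 < κ) (hk : 0 ≤ k)
    (hFW : ∀ x, -(k * |x|) - M ≤ F x + W x) (hcont : Continuous fun x => F x + W x) (y : ℝ) :
    Integrable fun x => gaussVar (2 * κ) (y - x) * exp (-((F x + W x) / (2 * κ))) :=
  integrable_gaussVar_sub_mul (by positivity) (by positivity)
    (by fun_prop : Continuous fun x => exp (-((F x + W x) / (2 * κ)))).aestronglyMeasurable
    (norm_exp_neg_div_le hκ hFW) y

lemma neg_mul_abs_sub_le_PhiW (hκ : 0 < κ) (hk : 0 ≤ k)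
    (hFW : ∀ x, -(k * |x|) - M ≤ F x + W x) (hcont : Continuous fun x => F x + W x) (y : ℝ) :
    -(k * |y|) - 2 * κ * log (exp (M / (2 * κ)) *
      ∫ u, gaussVar (2 * κ) u * exp (k / (2 * κ) * |u|)) ≤ PhiW κ F W y := by
  have h2κ : 0 < 2 * κ := by positivity
  set I := ∫ x, gaussVar (2 * κ) (y - x) * exp (-((F x + W x) / (2 * κ)))
  set Z := ∫ u, gaussVar (2 * κ) u * exp (k / (2 * κ) * |u|)
  have hI : 0 < I := integral_pos_of_forall_pos (integrable_gaussVar_sub_mul_exp hκ hk hFW hcont y)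
    fun x => mul_pos (gaussVar_pos h2κ _) (exp_pos _)
  have hIZ : I ≤ exp (M / (2 * κ)) * Z * exp (k / (2 * κ) * |y|) := by
    rw [mul_right_comm]
    exact integral_gaussVar_sub_mul_le h2κ (by positivity) (norm_exp_neg_div_le hκ hFW) y
  have hZ : 0 < exp (M / (2 * κ)) * Z := mul_pos (exp_pos _) <|
    integral_pos_of_forall_pos (integrable_gaussVar_mul_exp_mul_abs h2κ _)
      fun u => mul_pos (gaussVar_pos h2κ _) (exp_pos _)
  have hlog := log_le_log hI hIZ
  rw [log_mul hZ.ne' (exp_pos _).ne', log_exp] at hlog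
  have hlog' := mul_le_mul_of_nonneg_left hlog h2κ.le
  have hk' : 2 * κ * (k / (2 * κ) * |y|) = k * |y| := by field_simp
  rw [PhiW, neg_mul]
  linarith

end PhiW

theorem stmt16 (κ : ℝ) (hκ : 0 < κ) (W F : ℝ → ℝ)
    (hWlip : ∀ K : Set ℝ, IsCompact K → ∃ L : NNReal, LipschitzOnWith L W K)
    (hWtop : ∃ c : ℝ, ∀ᶠ x in atTop, c ≤ W x / |x|)
    (hWbot : ∃ c : ℝ, ∀ᶠ x in atBot, c ≤ W x / |x|)
    (hF : Continuous F)
    (hFgrow : Tendsto (fun x => F x / |x|) (cocompact ℝ) (𝓝 0)) :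
    (∀ y : ℝ,
      Integrable (fun x => gaussVar (2 * κ) (y - x) * Real.exp (-((F x + W x) / (2 * κ))))) ∧
    (∃ c : ℝ, ∀ᶠ y in atTop, c ≤ PhiW κ F W y / y) ∧
    (∃ c : ℝ, ∀ᶠ y in atBot, c ≤ PhiW κ F W y / |y|) := by
  have hFW : Continuous fun x => F x + W x :=
    hF.add (locallyLipschitz_of_forall_isCompact hWlip).continuous
  obtain ⟨c, hc⟩ := exists_le_div_abs_cocompact hWtop hWbot
  have hcFW : ∀ᶠ x in cocompact ℝ, c - 1 ≤ (F x + W x) / |x| := by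
    filter_upwards [hc, hFgrow.eventually (eventually_ge_nhds (by norm_num : (-1 : ℝ) < 0))]
      with x hWx hFx
    rw [add_div]
    linarith
  obtain ⟨k, M, hk, hbound⟩ := exists_forall_neg_mul_abs_sub_le hFW hcFW
  obtain ⟨c', hΦ⟩ :=
    exists_le_div_abs_cocompact_of_forall (neg_mul_abs_sub_le_PhiW hκ hk hbound hFW)
  refine ⟨integrable_gaussVar_sub_mul_exp hκ hk hbound hFW, ⟨c', ?_⟩,
    ⟨c', hΦ.filter_mono atBot_le_cocompact⟩⟩
  filter_upwards [hΦ.filter_mono atTop_le_cocompact, eventually_ge_atTop 0] with y hy hy0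
  rwa [abs_of_nonneg hy0] at hy
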